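/- arXiv:1110.2963 — 2 statements merged into one kernel-verified Lean document; each statement's English description precedes it below -/
import Mathlib

section
/- Let k be a field, let n ≥ 1, and let α ≠ β be elements of k. Set a₁ = −(α + β) and a₀ = αβ, and define the sequence σ (indexed by the integers) by σ_k = 0 for k < 1, σ₁ = 1, and σ_k = −a₁ σ_{k−1} − a₀ σ_{k−2} for k > 1. Let H : k^{n+1} → k be the linear form with coefficients H_0, …, H_n, set h(x) = Σ_{j=0}^{n} H_j x^j, and define γ_i = Σ_{j=0}^{n} H_j (a₀^j σ_{i−j} − a₀^i σ_{j−i}) for 0 ≤ i ≤ n. Then (β − α)·γ_i = h(α)·β^i − h(β)·α^i for all 0 ≤ i ≤ n. Consequently: (a) if h(α) = h(β) = 0, then the subspace of k^{n+1} spanned by v_α and v_β is contained in the kernel of H; (b) if h(α) and h(β) are not both zero, then the intersection of the subspace spanned by v_α and v_β with the kernel of H is the one-dimensional subspace spanned by (γ_0, γ_1, …, γ_n). -/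
/-!
The recurrence makes `σ` the Lucas sequence `σ_m = (β^m - α^m) / (β - α)` for `m ≥ 0`, so the
`j`-th summand of `(β - α) γ_i` is `H_j (α^j β^i - α^i β^j)`, and summing over `j` gives
`(β - α) γ = h(α) v_β - h(β) v_α`. Since `H v_t = h(t)`, the rest is the general fact that for a
linear form `f` not vanishing on both `u` and `w`, the line spanned by `f(u) w - f(w) u` is
`span {u, w} ∩ ker f`; the vector is nonzero because `v_α, v_β` are independent when `n ≥ 1`.
-/

open Submodule

section LucasSequence

variable {R : Type*} [CommRing R] {α β : R} {σ : ℤ → R}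

theorem sub_mul_eq_pow_sub_pow_of_recurrence (hσ0 : σ 0 = 0) (hσ1 : σ 1 = 1)
    (hσ : ∀ m : ℤ, 1 < m → σ m = (α + β) * σ (m - 1) - α * β * σ (m - 2)) (m : ℕ) :
    (β - α) * σ m = β ^ m - α ^ m := by
  induction m using Nat.twoStepInduction with
  | zero => simp [hσ0]
  | one => simp [hσ1]
  | more m ih₀ ih₁ =>
    rw [hσ _ (by omega), show ((m + 2 : ℕ) : ℤ) - 1 = (m + 1 : ℕ) by push_cast; ring,
      show ((m + 2 : ℕ) : ℤ) - 2 = m by push_cast; ring]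
    linear_combination (α + β) * ih₁ - α * β * ih₀

theorem sub_mul_pow_mul_sigma_sub_pow_mul_sigma (hσ0 : ∀ m : ℤ, m < 1 → σ m = 0) (hσ1 : σ 1 = 1)
    (hσ : ∀ m : ℤ, 1 < m → σ m = (α + β) * σ (m - 1) - α * β * σ (m - 2)) (i j : ℕ) :
    (β - α) * ((α * β) ^ j * σ (i - j) - (α * β) ^ i * σ (j - i)) =
      α ^ j * β ^ i - α ^ i * β ^ j := by
  have hpow := sub_mul_eq_pow_sub_pow_of_recurrence (hσ0 0 one_pos) hσ1 hσ
  rcases le_total j i with h | h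
  · obtain ⟨d, rfl⟩ := Nat.exists_eq_add_of_le h
    rw [hσ0 (j - (j + d : ℕ)) (by omega), show ((j + d : ℕ) : ℤ) - j = d by push_cast; ring]
    linear_combination (α * β) ^ j * hpow d
  · obtain ⟨d, rfl⟩ := Nat.exists_eq_add_of_le h
    rw [hσ0 (i - (i + d : ℕ)) (by omega), show ((i + d : ℕ) : ℤ) - i = d by push_cast; ring]
    linear_combination -(α * β) ^ i * hpow d

end LucasSequence

section LinearForm

variable {K V : Type*} [Field K] [AddCommGroup V] [Module K V] (f : V →ₗ[K] K) {u w : V}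

theorem span_pair_le_ker (hu : f u = 0) (hw : f w = 0) : span K {u, w} ≤ LinearMap.ker f := by
  rw [span_le, Set.pair_subset_iff]
  exact ⟨hu, hw⟩

theorem smul_sub_smul_ne_zero (huw : LinearIndependent K ![u, w]) (h : f u ≠ 0 ∨ f w ≠ 0) :
    f u • w - f w • u ≠ 0 := by
  intro h0
  have := LinearIndependent.pair_iff.mp huw (-f w) (f u) (by rw [← h0]; module)
  rcases h with h | h <;> simp_all

theorem mem_span_smul_sub_smul_of_apply_ne_zero (hu : f u ≠ 0) {s t : K}
    (hst : f (s • u + t • w) = 0) : s • u + t • w ∈ K ∙ (f u • w - f w • u) := by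
  rw [map_add, map_smul, map_smul, smul_eq_mul, smul_eq_mul] at hst
  have hs : s = t / f u * -f w := by field_simp; linear_combination hst
  refine mem_span_singleton.mpr ⟨t / f u, ?_⟩
  rw [hs, smul_sub, smul_smul, smul_smul, div_mul_cancel₀ t hu]
  module

theorem span_pair_inf_ker_eq (h : f u ≠ 0 ∨ f w ≠ 0) :
    span K {u, w} ⊓ LinearMap.ker f = K ∙ (f u • w - f w • u) := by
  refine le_antisymm (fun x hx => ?_) ?_
  · obtain ⟨hx, hfx⟩ := mem_inf.mp hx
    obtain ⟨s, t, rfl⟩ := mem_span_pair.mp hx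
    rcases h with h | h
    · exact mem_span_smul_sub_smul_of_apply_ne_zero f h hfx
    · rw [← neg_sub, ← Set.neg_singleton, span_neg, add_comm]
      rw [add_comm] at hfx
      exact mem_span_smul_sub_smul_of_apply_ne_zero f h hfx
  · rw [span_singleton_le_iff_mem, mem_inf, LinearMap.mem_ker]
    refine ⟨sub_mem (smul_mem _ _ (subset_span (by simp))) (smul_mem _ _ (subset_span (by simp))),
      ?_⟩
    simp [mul_comm]

end LinearForm

theorem linearIndependent_pow_pair {K : Type*} [Field K] {n : ℕ} (hn : 1 ≤ n) {α β : K}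
    (hαβ : α ≠ β) :
    LinearIndependent K ![fun i : Fin (n + 1) => α ^ (i : ℕ), fun i => β ^ (i : ℕ)] := by
  refine LinearIndependent.pair_iff.mpr fun s t hst => ?_
  have h0 := congrFun hst 0
  have h1 := congrFun hst ⟨1, by omega⟩
  simp only [Pi.add_apply, Pi.smul_apply, smul_eq_mul, Fin.val_zero, pow_zero, mul_one,
    Pi.zero_apply, pow_one] at h0 h1
  have ht : t * (β - α) = 0 := by linear_combination h1 - α * h0
  have ht0 : t = 0 := (mul_eq_zero.mp ht).resolve_right (sub_ne_zero.mpr hαβ.symm)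
  exact ⟨by linear_combination h0 - ht0, ht0⟩

/-- explicit rational formula for the intersection of the secant
`⟨v_α, v_β⟩` with the kernel of a linear form, via the sequence `σ`. -/
theorem stmt_5 {k : Type*} [Field k] {n : ℕ} (hn : 1 ≤ n)
    (α β : k) (hαβ : α ≠ β)
    (a₁ a₀ : k) (ha₁ : a₁ = -(α + β)) (ha₀ : a₀ = α * β)
    (σ : ℤ → k) (hσ0 : ∀ m : ℤ, m < 1 → σ m = 0) (hσ1 : σ 1 = 1)
    (hσ : ∀ m : ℤ, 1 < m → σ m = -a₁ * σ (m - 1) - a₀ * σ (m - 2))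
    (H : Fin (n + 1) → k) (Hmap : (Fin (n + 1) → k) →ₗ[k] k)
    (hHmap : ∀ v, Hmap v = ∑ i, H i * v i)
    (γ : Fin (n + 1) → k)
    (hγ : ∀ i, γ i = ∑ j, H j *
        (a₀ ^ (j : ℕ) * σ (((i : ℕ) : ℤ) - ((j : ℕ) : ℤ))
          - a₀ ^ (i : ℕ) * σ (((j : ℕ) : ℤ) - ((i : ℕ) : ℤ)))) :
    let vα : Fin (n + 1) → k := fun i => α ^ (i : ℕ)
    let vβ : Fin (n + 1) → k := fun i => β ^ (i : ℕ)
    let hval : k → k := fun t => ∑ j, H j * t ^ (j : ℕ)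
    (∀ i : Fin (n + 1), (β - α) * γ i = hval α * β ^ (i : ℕ) - hval β * α ^ (i : ℕ)) ∧
    ((hval α = 0 ∧ hval β = 0) →
        Submodule.span k {vα, vβ} ≤ LinearMap.ker Hmap) ∧
    (¬ (hval α = 0 ∧ hval β = 0) →
        γ ≠ 0 ∧
        Submodule.span k {vα, vβ} ⊓ LinearMap.ker Hmap = Submodule.span k {γ}) := by
  intro vα vβ hval
  subst ha₁ ha₀
  have hHα : Hmap vα = hval α := hHmap vα
  have hHβ : Hmap vβ = hval β := hHmap vβ
  have hcoord (i : Fin (n + 1)) :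
      (β - α) * γ i = hval α * β ^ (i : ℕ) - hval β * α ^ (i : ℕ) := by
    rw [hγ i, Finset.mul_sum, Finset.sum_mul, Finset.sum_mul, ← Finset.sum_sub_distrib]
    refine Finset.sum_congr rfl fun j _ => ?_
    linear_combination H j * sub_mul_pow_mul_sigma_sub_pow_mul_sigma hσ0 hσ1
      (fun m hm => by rw [hσ m hm, neg_neg]) i j
  have hβα : β - α ≠ 0 := sub_ne_zero.mpr hαβ.symm
  have hγ_eq : γ = (β - α)⁻¹ • (Hmap vα • vβ - Hmap vβ • vα) := by
    ext i
    rw [Pi.smul_apply, smul_eq_mul, eq_inv_mul_iff_mul_eq₀ hβα, hcoord, hHα, hHβ]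
    rfl
  refine ⟨hcoord, fun ⟨hα, hβ⟩ => span_pair_le_ker Hmap (hHα.trans hα) (hHβ.trans hβ),
    fun hne => ?_⟩
  have hne' : Hmap vα ≠ 0 ∨ Hmap vβ ≠ 0 := by rw [hHα, hHβ]; tauto
  rw [hγ_eq, span_singleton_smul_eq (inv_ne_zero hβα).isUnit, span_pair_inf_ker_eq Hmap hne']
  exact ⟨smul_ne_zero (inv_ne_zero hβα)
    (smul_sub_smul_ne_zero Hmap (linearIndependent_pow_pair hn hαβ) hne'), rfl⟩
end

section
/- Let k be a field and let ℓ ≥ 3 be an integer. Let (x_1, z_1), …, (x_6, z_6) be nonzero vectors in k² that are pairwise non-proportional (x_j z_m ≠ x_m z_j for j ≠ m), and define F_0, …, F_6 ∈ k by the expansion ∏_{j=1}^{6} (z_j X − x_j Z) = Σ_{i=0}^{6} F_i X^i Z^{6−i}. For 1 ≤ j ≤ 6 let w_j = (x_j^i z_j^{2ℓ−i})_{i=0}^{2ℓ} ∈ k^{2ℓ+1}, and for 0 ≤ i ≤ 2ℓ−6 let W_i : k^{2ℓ+1} → k be the linear form W_i(U) = Σ_{j=0}^{6} F_j U_{i+j}.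 Then the subspace of k^{2ℓ+1} spanned by w_1, …, w_6 equals the intersection of the kernels of W_0, …, W_{2ℓ−6}, and this subspace has dimension 6. -/
/-!
The vector `w_j` is the point `ν(x_j, z_j)` of the rational normal curve
`ν(a, b) = (a^i b^(2ℓ-i))_i`, and `W_i(ν(a, b)) = a^i b^(2ℓ-6-i) F(a, b)`. Since the binary
sextic `F` vanishes at every `(x_j, z_j)`, all `w_j` lie in the common kernel of the `W_i`.

The forms `W_i` are linearly independent: a relation `∑ c_i W_i = 0` says exactly that the
polynomial `(∑ c_i X^i) (∑ F_j X^j)` vanishes, and `F ≠ 0`. Hence the kernel has dimension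
`(2ℓ + 1) - (2ℓ - 5) = 6`.

The six points `w_j` are linearly independent, by induction on their number: the forms of the
linear factor `z_m X - x_m Z` send `ν_D(a, b)` to `(z_m a - x_m b) ν_{D-1}(a, b)`, which kills
the `m`-th point and rescales the others by nonzero factors. So their span is a 6-dimensional
subspace of the kernel.
-/

open Finset Matrix Polynomial

namespace RationalNormalCurve

variable {k : Type*} [Field k] {d r N : ℕ}

def curvePoint (D : ℕ) (a b : k) : Fin (D + 1) → k := fun n => a ^ (n : ℕ) * b ^ (D - n)

def formEval (F : Fin (d + 1) → k) (a b : k) : k :=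
  ∑ j : Fin (d + 1), F j * a ^ (j : ℕ) * b ^ (d - j)

/-- Row `i` is the coefficient vector of the form `U ↦ ∑ j, F j * U (i + j)`, i.e. `W_i`. -/
def bandMatrix (F : Fin (d + 1) → k) (r N : ℕ) : Matrix (Fin r) (Fin N) k :=
  Matrix.of fun i n => ∑ j : Fin (d + 1), if (i : ℕ) + j = n then F j else 0

lemma bandMatrix_mulVec_apply (F : Fin (d + 1) → k) (U : Fin N → k) (i : Fin r)
    (hi : (i : ℕ) + d < N) :
    (bandMatrix F r N *ᵥ U) i = ∑ j : Fin (d + 1), F j * U ⟨i + j, by omega⟩ := by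
  simp only [mulVec, dotProduct, bandMatrix, of_apply, sum_mul, ite_mul, zero_mul]
  rw [sum_comm]
  refine sum_congr rfl fun j _ => ?_
  rw [Fintype.sum_eq_single ⟨i + j, by omega⟩ fun n hn => if_neg fun h => hn (Fin.ext h.symm)]
  simp

lemma curvePoint_ne_zero (D : ℕ) {a b : k} (hab : (a, b) ≠ (0, 0)) :
    curvePoint D a b ≠ 0 := by
  intro h
  have hb : b ^ D = 0 := by simpa [curvePoint] using congrFun h 0
  have ha : a ^ D = 0 := by simpa [curvePoint] using congrFun h (Fin.last D)
  exact hab (Prod.ext (eq_zero_of_pow_eq_zero ha) (eq_zero_of_pow_eq_zero hb))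

lemma bandMatrix_mulVec_curvePoint_apply (F : Fin (d + 1) → k) {D : ℕ} (a b : k) (i : Fin r)
    (hi : (i : ℕ) + d ≤ D) :
    (bandMatrix F r (D + 1) *ᵥ curvePoint D a b) i
      = formEval F a b * (a ^ (i : ℕ) * b ^ (D - d - i)) := by
  rw [bandMatrix_mulVec_apply F _ i (by omega), formEval, sum_mul]
  refine sum_congr rfl fun j _ => ?_
  have hj := j.isLt
  rw [curvePoint, pow_add, show D - (i + j) = (d - j) + (D - d - i) by omega, pow_add]
  ring

lemma coeff_ofFn_mul_ofFn [DecidableEq k] (c : Fin r → k) (F : Fin (d + 1) → k) (n : ℕ) :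
    (ofFn r c * ofFn (d + 1) F).coeff n
      = ∑ i : Fin r, ∑ j : Fin (d + 1), if (i : ℕ) + j = n then c i * F j else 0 := by
  simp [ofFn_eq_sum_monomial, sum_mul_sum, finsetSum_coeff, monomial_mul_monomial, coeff_monomial]

lemma bandMatrix_transpose_mulVec_apply [DecidableEq k] (F : Fin (d + 1) → k) (c : Fin r → k)
    (n : Fin N) : ((bandMatrix F r N)ᵀ *ᵥ c) n = (ofFn r c * ofFn (d + 1) F).coeff n := by
  simp only [coeff_ofFn_mul_ofFn, mulVec, dotProduct, transpose_apply, bandMatrix, of_apply,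
    sum_mul, ite_mul, zero_mul, mul_comm (c _)]

lemma injective_bandMatrix_transpose_mulVecLin {F : Fin (d + 1) → k} (hF : F ≠ 0)
    (h : r + d ≤ N) : Function.Injective (bandMatrix F r N)ᵀ.mulVecLin := by
  classical
  rw [← LinearMap.ker_eq_bot, LinearMap.ker_eq_bot']
  intro c hc
  have hprod : ofFn r c * ofFn (d + 1) F = 0 := by
    ext n
    rw [coeff_zero]
    by_cases hn : n < N
    · rw [← bandMatrix_transpose_mulVec_apply F c ⟨n, hn⟩]
      exact congrFun hc _
    · rw [coeff_ofFn_mul_ofFn]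
      exact sum_eq_zero fun i _ => sum_eq_zero fun j _ => if_neg (by omega)
  have hFpoly : ofFn (d + 1) F ≠ 0 := fun h0 => hF (injective_ofFn _ (h0.trans (map_zero _).symm))
  exact injective_ofFn r (((mul_eq_zero.mp hprod).resolve_right hFpoly).trans (map_zero _).symm)

lemma rank_bandMatrix {F : Fin (d + 1) → k} (hF : F ≠ 0) (h : r + d ≤ N) :
    (bandMatrix F r N).rank = r := by
  rw [← rank_transpose, Matrix.rank,
    LinearMap.finrank_range_of_inj (injective_bandMatrix_transpose_mulVecLin hF h),
    Module.finrank_fin_fun]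

lemma finrank_ker_bandMatrix {F : Fin (d + 1) → k} (hF : F ≠ 0) (h : r + d ≤ N) :
    Module.finrank k (LinearMap.ker (bandMatrix F r N).mulVecLin) = N - r := by
  have := LinearMap.finrank_range_add_finrank_ker (bandMatrix F r N).mulVecLin
  rw [← Matrix.rank, rank_bandMatrix hF h, Module.finrank_fin_fun] at this
  omega

lemma bandMatrix_linearForm_mulVec_curvePoint (x₀ z₀ : k) (D : ℕ) (a b : k) :
    bandMatrix ![-x₀, z₀] (D + 1) (D + 1 + 1) *ᵥ curvePoint (D + 1) a b
      = (z₀ * a - x₀ * b) • curvePoint D a b := by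
  ext i
  rw [bandMatrix_mulVec_curvePoint_apply _ _ _ i (by omega)]
  simp only [formEval, Fin.sum_univ_succ, Fin.sum_univ_zero, curvePoint, Pi.smul_apply,
    smul_eq_mul, Matrix.cons_val_zero, Matrix.cons_val_succ, Fin.val_zero, Fin.val_succ,
    Nat.succ_eq_add_one, Nat.add_sub_cancel, Nat.sub_self, Nat.sub_zero]
  ring

variable {ι : Type*}

lemma eq_zero_of_sum_smul_curvePoint_eq_zero [DecidableEq ι] {x z : ι → k}
    (hnz : ∀ j, (x j, z j) ≠ (0, 0)) (hpair : ∀ j m, j ≠ m → x j * z m ≠ x m * z j)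
    (s : Finset ι) : ∀ D, #s ≤ D + 1 → ∀ g : ι → k,
      ∑ i ∈ s, g i • curvePoint D (x i) (z i) = 0 → ∀ i ∈ s, g i = 0 := by
  induction s using Finset.induction_on with
  | empty => simp
  | insert m s hm ih =>
    intro D hD g hg
    rw [card_insert_of_notMem hm] at hD
    rw [sum_insert hm] at hg
    have hs : ∀ i ∈ s, g i = 0 := by
      cases D with
      | zero => simp [card_eq_zero.mp (by omega : #s = 0)]
      | succ D =>
        intro i hi
        have hL := congrArg (bandMatrix ![-x m, z m] (D + 1) (D + 1 + 1) *ᵥ ·) hg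
        simp only [mulVec_add, mulVec_sum, mulVec_smul, bandMatrix_linearForm_mulVec_curvePoint,
          smul_smul, mulVec_zero] at hL
        rw [show z m * x m - x m * z m = 0 by ring, mul_zero, zero_smul, zero_add] at hL
        have hne : z m * x i - x m * z i ≠ 0 :=
          sub_ne_zero.mpr (mul_comm (x i) (z m) ▸ hpair i m (ne_of_mem_of_not_mem hi hm))
        exact (mul_eq_zero.mp (ih D (by omega) _ hL i hi)).resolve_right hne
    rw [sum_eq_zero fun i hi => by rw [hs i hi, zero_smul], add_zero, smul_eq_zero] at hg
    intro i hi
    rcases mem_insert.mp hi with rfl | hi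
    · exact hg.resolve_right (curvePoint_ne_zero D (hnz i))
    · exact hs i hi

lemma linearIndependent_curvePoint [Fintype ι] {x z : ι → k}
    (hnz : ∀ j, (x j, z j) ≠ (0, 0)) (hpair : ∀ j m, j ≠ m → x j * z m ≠ x m * z j)
    {D : ℕ} (hD : Fintype.card ι ≤ D + 1) :
    LinearIndependent k fun j => curvePoint D (x j) (z j) := by
  classical
  rw [Fintype.linearIndependent_iff]
  exact fun g hg i => eq_zero_of_sum_smul_curvePoint_eq_zero hnz hpair univ D hD g hg i (mem_univ i)

theorem span_curvePoint_eq_ker_bandMatrix [Fintype ι] {x z : ι → k}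
    (hnz : ∀ j, (x j, z j) ≠ (0, 0)) (hpair : ∀ j m, j ≠ m → x j * z m ≠ x m * z j)
    {F : Fin (d + 1) → k} (hF : F ≠ 0) (hroot : ∀ j, formEval F (x j) (z j) = 0)
    (hcard : Fintype.card ι = d) {D : ℕ} (hr : r + d = D + 1) :
    Submodule.span k (Set.range fun j => curvePoint D (x j) (z j))
      = LinearMap.ker (bandMatrix F r (D + 1)).mulVecLin := by
  refine Submodule.eq_of_le_of_finrank_eq (Submodule.span_le.mpr ?_) ?_
  · rintro _ ⟨j, rfl⟩
    ext i
    rw [mulVecLin_apply, bandMatrix_mulVec_curvePoint_apply _ _ _ i (by omega), hroot, zero_mul,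
      Pi.zero_apply]
  · rw [finrank_span_eq_card (linearIndependent_curvePoint hnz hpair (by omega)),
      finrank_ker_bandMatrix hF (by omega)]
    omega

lemma formEval_eq_eval (F : Fin (d + 1) → k) (a b : k) :
    formEval F a b = MvPolynomial.eval ![a, b]
      (∑ i : Fin (d + 1), MvPolynomial.C (F i) * MvPolynomial.X 0 ^ (i : ℕ)
        * MvPolynomial.X 1 ^ (d - (i : ℕ))) := by
  simp [formEval]

end RationalNormalCurve

open RationalNormalCurve

lemma MvPolynomial.C_mul_X_sub_C_mul_X_ne_zero {k : Type*} [Field k] {x z : k}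
    (hxz : (x, z) ≠ (0, 0)) : (C z * X 0 - C x * X 1 : MvPolynomial (Fin 2) k) ≠ 0 := by
  intro h
  have hz : z = 0 := by simpa using congrArg (eval ![1, 0]) h
  have hx : x = 0 := by simpa using congrArg (eval ![0, 1]) h
  exact hxz (by rw [hx, hz])

/-- the span of the images of the six Weierstrass points on the
rational normal curve is the common kernel of the linear forms `W_i`, and has
dimension 6. -/
theorem stmt_8 {k : Type*} [Field k] (ℓ : ℕ) (hℓ : 3 ≤ ℓ)
    (x z : Fin 6 → k) (hnz : ∀ j, (x j, z j) ≠ (0, 0))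
    (hpair : ∀ j m, j ≠ m → x j * z m ≠ x m * z j)
    (F : Fin 7 → k)
    (hF : (∏ j, (MvPolynomial.C (z j) * MvPolynomial.X 0
            - MvPolynomial.C (x j) * MvPolynomial.X 1) : MvPolynomial (Fin 2) k)
        = ∑ i : Fin 7, MvPolynomial.C (F i) * MvPolynomial.X 0 ^ (i : ℕ)
            * MvPolynomial.X 1 ^ (6 - (i : ℕ)))
    (w : Fin 6 → Fin (2 * ℓ + 1) → k)
    (hw : ∀ j i, w j i = x j ^ (i : ℕ) * z j ^ (2 * ℓ - (i : ℕ))) :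
    (Submodule.span k (Set.range w) : Set (Fin (2 * ℓ + 1) → k))
      = {U | ∀ i : Fin (2 * ℓ - 5),
          ∑ j : Fin 7, F j * U ⟨(i : ℕ) + (j : ℕ), by
            have hi := i.isLt; have hj := j.isLt; omega⟩ = 0} ∧
    Module.finrank k ↥(Submodule.span k (Set.range w)) = 6 := by
  have hw' : w = fun j => curvePoint (2 * ℓ) (x j) (z j) := funext fun j => funext (hw j)
  have hroot : ∀ j, formEval F (x j) (z j) = 0 := fun j => by
    rw [formEval_eq_eval, ← hF, map_prod]
    exact prod_eq_zero (mem_univ j) (by simp [mul_comm])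
  have hF0 : F ≠ 0 := by
    rintro rfl
    refine prod_ne_zero_iff.mpr (fun j (_ : j ∈ univ) =>
      MvPolynomial.C_mul_X_sub_C_mul_X_ne_zero (hnz j)) ?_
    simp [hF]
  subst hw'
  refine ⟨?_, ?_⟩
  · rw [span_curvePoint_eq_ker_bandMatrix hnz hpair hF0 hroot (Fintype.card_fin 6)
      (r := 2 * ℓ - 5) (by omega)]
    ext U
    simp only [SetLike.mem_coe, LinearMap.mem_ker, mulVecLin_apply, funext_iff, Pi.zero_apply]
    exact forall_congr' fun i => by rw [bandMatrix_mulVec_apply F U i (by omega)]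
  · have hcard : Fintype.card (Fin 6) ≤ 2 * ℓ + 1 := by simp only [Fintype.card_fin]; omega
    rw [finrank_span_eq_card (linearIndependent_curvePoint hnz hpair hcard), Fintype.card_fin]
end
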